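/- Let n = (n_{ji}) be any ℓ×ℓ integer matrix and define, for each i, the invertible multiplication operator K_{β_i} := multiplication by c_{β_i}·Π_{j=1}^{ℓ} Π_{t=1}^{l_j} W_{j,t}^{−N_{ji}} · Π_{j=1}^{ℓ} Π_{p=1}^{m_j} V_{j,p}^{n_{ji}}, where N = (N_{ji}) is any ℓ×ℓ integer matrix and c_{β_i} := s^{Σ_j d_j·m_j·n_{ji}}. Then for all 1 ≤ i, j ≤ ℓ: K_{β_i} ∘ E_j ∘ K_{β_i}^{−1} = q^{d_j·n_{ji}}·E_j and K_{β_i} ∘ F_j ∘ K_{β_i}^{−1} = q^{−d_j·n_{ji}}·F_j, as identities of ℂ(s)-linear endomorphisms of F. (These are the defining relations of the Cartan elements K_{β_i} of an arbitrary rational form of the quantum group in the representation of Theorem 4.1.) -/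
import Mathlib


open MvPolynomial Finset

set_option synthInstance.maxHeartbeats 1000000
set_option maxHeartbeats 1000000

noncomputable section

/-- The base field `ℂ(s)`. -/
abbrev K0 := RatFunc ℂ

/-- The variables. -/
abbrev Var (ℓ : ℕ) (m l : Fin ℓ → ℕ) := ((i : Fin ℓ) × Fin (m i)) ⊕ ((i : Fin ℓ) × Fin (l i))

/-- The rational function field over `ℂ(s)` in the given variables. -/
abbrev FF (ℓ : ℕ) (m l : Fin ℓ → ℕ) := FractionRing (MvPolynomial (Var ℓ m l) K0)

variable (ℓ : ℕ) (m l : Fin ℓ → ℕ) (d : Fin ℓ → ℕ) (a : Fin ℓ → Fin ℓ → ℤ)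

def cstHom : K0 →+* FF ℓ m l :=
  (algebraMap (MvPolynomial (Var ℓ m l) K0) (FF ℓ m l)).comp
    (C : K0 →+* MvPolynomial (Var ℓ m l) K0)

def cst (c : K0) : FF ℓ m l := cstHom ℓ m l c

/-- The variable `V_{i,k}`. -/
def V (i : Fin ℓ) (k : Fin (m i)) : FF ℓ m l :=
  algebraMap (MvPolynomial (Var ℓ m l) K0) (FF ℓ m l) (X (Sum.inl ⟨i, k⟩))

/-- The variable `W_{i,t}`. -/
def W (i : Fin ℓ) (t : Fin (l i)) : FF ℓ m l :=
  algebraMap (MvPolynomial (Var ℓ m l) K0) (FF ℓ m l) (X (Sum.inr ⟨i, t⟩))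

/-- `s ∈ ℂ(s)`. -/
def sElt : K0 := RatFunc.X

/-- `q = s²`. -/
def qElt : K0 := RatFunc.X ^ 2

/-- `q^e` for an integer exponent `e`. -/
def qz (e : ℤ) : K0 := qElt ^ e

/-- `q_i^e = q^{d_i·e}`. -/
def qiz (i : Fin ℓ) (e : ℤ) : K0 := qElt ^ ((d i : ℤ) * e)

/-- `q_i − q_i⁻¹`. -/
def qdiff (i : Fin ℓ) : K0 := qiz ℓ d i 1 - qiz ℓ d i (-1)

/-- `c_i = s^{Σ_j d_j·m_j·a_{ji}}`. -/
def cElt (i : Fin ℓ) : K0 := sElt ^ (∑ j : Fin ℓ, (d j : ℤ) * (m j : ℤ) * a j i)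

/-- The algebra automorphism of the polynomial ring rescaling the variable `w` by the
nonzero constant `c` and fixing all other variables. -/
def scalePoly (c : K0) (hc : c ≠ 0) (w : Var ℓ m l) :
    MvPolynomial (Var ℓ m l) K0 ≃ₐ[K0] MvPolynomial (Var ℓ m l) K0 :=
  AlgEquiv.ofAlgHom
    (aeval (fun j => if j = w then MvPolynomial.C c * X j else X j))
    (aeval (fun j => if j = w then MvPolynomial.C c⁻¹ * X j else X j))
    (by
      apply MvPolynomial.algHom_ext; intro j
      by_cases h : j = w <;>
        simp [h, ← mul_assoc, ← C_mul, mul_inv_cancel₀ hc, inv_mul_cancel₀ hc])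
    (by
      apply MvPolynomial.algHom_ext; intro j
      by_cases h : j = w <;>
        simp [h, ← mul_assoc, ← C_mul, mul_inv_cancel₀ hc, inv_mul_cancel₀ hc])

/-- The induced automorphism of `F`. -/
def scaleField (c : K0) (hc : c ≠ 0) (w : Var ℓ m l) : FF ℓ m l ≃+* FF ℓ m l :=
  IsFractionRing.ringEquivOfRingEquiv (scalePoly ℓ m l c hc w).toRingEquiv

/-- `u_{i,k}` : the automorphism `V_{i,k} ↦ q^{d_i}·V_{i,k}`. -/
def uik (i : Fin ℓ) (k : Fin (m i)) : FF ℓ m l ≃+* FF ℓ m l :=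
  scaleField ℓ m l (qElt ^ (d i)) (pow_ne_zero _ (pow_ne_zero _ RatFunc.X_ne_zero))
    (Sum.inl ⟨i, k⟩)

/-- The field `ℂ(s)({W_{i,t}})` of rational functions in the `W`-variables only:
the coefficient field for the polynomials `R_i^{(±)}`. -/
abbrev WField := FractionRing (MvPolynomial ((i : Fin ℓ) × Fin (l i)) K0)

/-- `W_{i,t}` as an element of `ℂ(s)({W_{i,t}})`. -/
def Wsmall (i : Fin ℓ) (t : Fin (l i)) : WField ℓ l :=
  algebraMap (MvPolynomial ((i : Fin ℓ) × Fin (l i)) K0) (WField ℓ l) (X ⟨i, t⟩)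

/-- The natural embedding `ℂ(s)({W_{i,t}}) ↪ F`. -/
def wEmb : WField ℓ l →+* FF ℓ m l :=
  IsFractionRing.lift (g :=
    ((algebraMap (MvPolynomial (Var ℓ m l) K0) (FF ℓ m l)).comp
      (rename (Sum.inr : ((i : Fin ℓ) × Fin (l i)) → Var ℓ m l)).toRingHom))
    ((IsFractionRing.injective (MvPolynomial (Var ℓ m l) K0) (FF ℓ m l)).comp
      (rename_injective _ Sum.inr_injective))

/-- Evaluation of a polynomial with coefficients in `ℂ(s)({W_{i,t}})` at a point of `F`. -/
def Rval (P : Polynomial (WField ℓ l)) (x : FF ℓ m l) : FF ℓ m l :=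
  Polynomial.eval₂ (wEmb ℓ m l) x P

/-- The operator `E_i`. -/
def Eop (Rp : (i : Fin ℓ) → Polynomial (WField ℓ l)) (i : Fin ℓ) :
    FF ℓ m l → FF ℓ m l := fun f =>
  cst ℓ m l (cElt ℓ m d a i / qdiff ℓ d i) * (∏ p : Fin (m i), V ℓ m l i p) *
    (∏ j ∈ univ.filter (fun j => i < j), ∏ p : Fin (m j), (V ℓ m l j p) ^ (a j i)) *
    ∑ k : Fin (m i),
      ((V ℓ m l i k) ^ (-2 : ℤ) * Rval ℓ m l (Rp i) ((V ℓ m l i k) ^ 2) *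
        (∏ j ∈ univ.filter (fun j => i < j), ∏ r ∈ range (-(a j i)).toNat, ∏ p : Fin (m j),
          ((V ℓ m l i k) ^ 2
            - cst ℓ m l (qz ((d j : ℤ) * (a j i + 2 * ((r : ℤ) + 1)))) * (V ℓ m l j p) ^ 2)) /
        (∏ p ∈ univ.erase k, ((V ℓ m l i k) ^ 2 - (V ℓ m l i p) ^ 2))) *
      (uik ℓ m l d i k).symm f

/-- The operator `F_i`. -/
def Fop (Rm : (i : Fin ℓ) → Polynomial (WField ℓ l)) (i : Fin ℓ) :
    FF ℓ m l → FF ℓ m l := fun f =>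
  cst ℓ m l (-(qiz ℓ d i (-(2 * (m i : ℤ))) / qdiff ℓ d i)) * (∏ p : Fin (m i), V ℓ m l i p) *
    (∏ j ∈ univ.filter (fun j => j < i), ∏ p : Fin (m j), (V ℓ m l j p) ^ (a j i)) *
    ∑ k : Fin (m i),
      ((V ℓ m l i k) ^ (-2 : ℤ)
          * Rval ℓ m l (Rm i) (cst ℓ m l (qiz ℓ d i 2) * (V ℓ m l i k) ^ 2) *
        (∏ j ∈ univ.filter (fun j => j < i), ∏ r ∈ range (-(a j i)).toNat, ∏ p : Fin (m j),
          (cst ℓ m l (qiz ℓ d i 2) * (V ℓ m l i k) ^ 2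
            - cst ℓ m l (qz ((d j : ℤ) * (a j i + 2 * ((r : ℤ) + 1)))) * (V ℓ m l j p) ^ 2)) /
        (∏ p ∈ univ.erase k, ((V ℓ m l i k) ^ 2 - (V ℓ m l i p) ^ 2))) *
      (uik ℓ m l d i k) f

/-- The Cartan element `K_{β_i}` of an arbitrary rational form, given integer matrices
`n = (n_{ji})` and `N = (N_{ji})`. -/
def Kbeta (nM NM : Fin ℓ → Fin ℓ → ℤ) (i : Fin ℓ) : FF ℓ m l :=
  cst ℓ m l (sElt ^ (∑ j : Fin ℓ, (d j : ℤ) * (m j : ℤ) * nM j i)) *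
    (∏ j : Fin ℓ, ∏ t : Fin (l j), (W ℓ m l j t) ^ (-(NM j i))) *
    ∏ j : Fin ℓ, ∏ p : Fin (m j), (V ℓ m l j p) ^ (nM j i)

/-- Multiplication by `K_{β_i}`, resp. `K_{β_i}⁻¹`. -/
def Kbop (nM NM : Fin ℓ → Fin ℓ → ℤ) (i : Fin ℓ) : FF ℓ m l → FF ℓ m l :=
  fun f => Kbeta ℓ m l d nM NM i * f

def Kbinv (nM NM : Fin ℓ → Fin ℓ → ℤ) (i : Fin ℓ) : FF ℓ m l → FF ℓ m l :=
  fun f => (Kbeta ℓ m l d nM NM i)⁻¹ * f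

section Aux

lemma qElt_ne_zero : qElt ≠ 0 := pow_ne_zero _ RatFunc.X_ne_zero

lemma sElt_ne_zero : sElt ≠ 0 := RatFunc.X_ne_zero

lemma qz_ne_zero (e : ℤ) : qz e ≠ 0 := zpow_ne_zero _ qElt_ne_zero

lemma qz_neg (e : ℤ) : qz (-e) = (qz e)⁻¹ := zpow_neg _ _

lemma cst_mul (x y : K0) : cst ℓ m l (x * y) = cst ℓ m l x * cst ℓ m l y :=
  map_mul (cstHom ℓ m l) x y

lemma cst_inv (x : K0) : cst ℓ m l x⁻¹ = (cst ℓ m l x)⁻¹ :=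
  map_inv₀ (cstHom ℓ m l) x

lemma cst_zpow (x : K0) (e : ℤ) : cst ℓ m l (x ^ e) = cst ℓ m l x ^ e :=
  map_zpow₀ (cstHom ℓ m l) x e

lemma cst_ne_zero {c : K0} (hc : c ≠ 0) : cst ℓ m l c ≠ 0 := fun h =>
  hc ((cstHom ℓ m l).injective (h.trans (map_zero (cstHom ℓ m l)).symm))

lemma V_ne_zero (i : Fin ℓ) (k : Fin (m i)) : V ℓ m l i k ≠ 0 := fun h =>
  MvPolynomial.X_ne_zero _
    (IsFractionRing.injective (MvPolynomial (Var ℓ m l) K0) (FF ℓ m l)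
      (h.trans (map_zero (algebraMap (MvPolynomial (Var ℓ m l) K0) (FF ℓ m l))).symm))

lemma W_ne_zero (i : Fin ℓ) (t : Fin (l i)) : W ℓ m l i t ≠ 0 := fun h =>
  MvPolynomial.X_ne_zero _
    (IsFractionRing.injective (MvPolynomial (Var ℓ m l) K0) (FF ℓ m l)
      (h.trans (map_zero (algebraMap (MvPolynomial (Var ℓ m l) K0) (FF ℓ m l))).symm))

lemma Kbeta_ne_zero (nM NM : Fin ℓ → Fin ℓ → ℤ) (i : Fin ℓ) :
    Kbeta ℓ m l d nM NM i ≠ 0 := by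
  unfold Kbeta
  refine mul_ne_zero (mul_ne_zero ?_ ?_) ?_
  · exact cst_ne_zero ℓ m l (zpow_ne_zero _ sElt_ne_zero)
  · exact Finset.prod_ne_zero_iff.mpr fun j' _ =>
      Finset.prod_ne_zero_iff.mpr fun t _ => zpow_ne_zero _ (W_ne_zero ℓ m l j' t)
  · exact Finset.prod_ne_zero_iff.mpr fun j' _ =>
      Finset.prod_ne_zero_iff.mpr fun p _ => zpow_ne_zero _ (V_ne_zero ℓ m l j' p)

lemma scalePoly_apply (c : K0) (hc : c ≠ 0) (w : Var ℓ m l)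
    (p : MvPolynomial (Var ℓ m l) K0) :
    scalePoly ℓ m l c hc w p
      = aeval (fun j => if j = w then MvPolynomial.C c * X j else X j) p := rfl

lemma scaleField_algebraMap (c : K0) (hc : c ≠ 0) (w : Var ℓ m l)
    (p : MvPolynomial (Var ℓ m l) K0) :
    scaleField ℓ m l c hc w (algebraMap (MvPolynomial (Var ℓ m l) K0) (FF ℓ m l) p)
      = algebraMap (MvPolynomial (Var ℓ m l) K0) (FF ℓ m l) (scalePoly ℓ m l c hc w p) := by
  simp [scaleField]

lemma uik_cst (j : Fin ℓ) (k : Fin (m j)) (c : K0) :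
    uik ℓ m l d j k (cst ℓ m l c) = cst ℓ m l c := by
  simp [uik, cst, cstHom, scaleField_algebraMap, scalePoly_apply, MvPolynomial.algebraMap_eq]

lemma uik_W (j : Fin ℓ) (k : Fin (m j)) (j' : Fin ℓ) (t : Fin (l j')) :
    uik ℓ m l d j k (W ℓ m l j' t) = W ℓ m l j' t := by
  simp [uik, W, scaleField_algebraMap, scalePoly_apply]

lemma uik_V (j : Fin ℓ) (k : Fin (m j)) (j' : Fin ℓ) (p : Fin (m j')) :
    uik ℓ m l d j k (V ℓ m l j' p)
      = (if (⟨j', p⟩ : (i : Fin ℓ) × Fin (m i)) = ⟨j, k⟩ then cst ℓ m l (qElt ^ (d j)) else 1)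
          * V ℓ m l j' p := by
  by_cases h : (⟨j', p⟩ : (i : Fin ℓ) × Fin (m i)) = ⟨j, k⟩
  · simp [uik, V, scaleField_algebraMap, scalePoly_apply, h, cst, cstHom,
      MvPolynomial.algebraMap_eq]
  · have h' : (Sum.inl ⟨j', p⟩ : Var ℓ m l) ≠ Sum.inl ⟨j, k⟩ := by simpa using h
    simp [uik, V, scaleField_algebraMap, scalePoly_apply, h, h']

lemma uik_Kbeta (nM NM : Fin ℓ → Fin ℓ → ℤ) (i j : Fin ℓ) (k : Fin (m j)) :
    uik ℓ m l d j k (Kbeta ℓ m l d nM NM i)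
      = cst ℓ m l (qz ((d j : ℤ) * nM j i)) * Kbeta ℓ m l d nM NM i := by
  have hite : (∏ j' : Fin ℓ, ∏ p : Fin (m j'),
      ((if (⟨j', p⟩ : (i' : Fin ℓ) × Fin (m i')) = ⟨j, k⟩
          then cst ℓ m l (qElt ^ (d j)) else 1) ^ (nM j' i)))
      = cst ℓ m l (qz ((d j : ℤ) * nM j i)) := by
    rw [Finset.prod_sigma' univ (fun _ => univ)
      (fun j' p => ((if (⟨j', p⟩ : (i' : Fin ℓ) × Fin (m i')) = ⟨j, k⟩
          then cst ℓ m l (qElt ^ (d j)) else 1) ^ (nM j' i)))]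
    have h1 : ∀ x ∈ (univ.sigma fun _ => (univ : Finset (Fin (m _)))),
        ((if (⟨x.1, x.2⟩ : (i' : Fin ℓ) × Fin (m i')) = ⟨j, k⟩
            then cst ℓ m l (qElt ^ (d j)) else 1) ^ (nM x.1 i))
          = if x = (⟨j, k⟩ : (i' : Fin ℓ) × Fin (m i'))
              then cst ℓ m l (qElt ^ (d j)) ^ (nM x.1 i) else 1 := by
      intro x _
      rw [Sigma.eta]
      split_ifs <;> simp
    rw [Finset.prod_congr rfl h1, Finset.prod_ite_eq']
    have hmem : (⟨j, k⟩ : (i' : Fin ℓ) × Fin (m i')) ∈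
        (univ.sigma fun _ => (univ : Finset (Fin (m _)))) := by
      simp [Finset.mem_sigma]
    rw [if_pos hmem, ← cst_zpow, qz, ← zpow_natCast qElt (d j), ← zpow_mul]
  unfold Kbeta
  simp only [map_mul, map_prod, map_zpow₀, uik_cst, uik_W, uik_V, mul_zpow,
    Finset.prod_mul_distrib]
  rw [hite]
  ring

lemma uik_symm_Kbeta (nM NM : Fin ℓ → Fin ℓ → ℤ) (i j : Fin ℓ) (k : Fin (m j)) :
    (uik ℓ m l d j k).symm (Kbeta ℓ m l d nM NM i)
      = cst ℓ m l (qz (-((d j : ℤ) * nM j i))) * Kbeta ℓ m l d nM NM i := by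
  apply (uik ℓ m l d j k).injective
  rw [RingEquiv.apply_symm_apply, map_mul, uik_cst, uik_Kbeta, ← mul_assoc, ← cst_mul]
  rw [show qz (-((d j : ℤ) * nM j i)) * qz ((d j : ℤ) * nM j i) = 1 by
    rw [qz_neg, inv_mul_cancel₀ (qz_ne_zero _)]]
  rw [show cst ℓ m l 1 = 1 from map_one (cstHom ℓ m l), one_mul]

lemma conj_sum {F ι : Type*} [Field F] (s : Finset ι) (Kb c A : F) (G uf : ι → F)
    (hK : Kb ≠ 0) :
    Kb * (A * ∑ k ∈ s, G k * (c * (Kb⁻¹ * uf k))) = c * (A * ∑ k ∈ s, G k * uf k) := by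
  have h : ∀ k ∈ s, G k * (c * (Kb⁻¹ * uf k)) = Kb⁻¹ * (c * (G k * uf k)) :=
    fun k _ => by ring
  rw [Finset.sum_congr rfl h, ← Finset.mul_sum, ← Finset.mul_sum,
    show Kb * (A * (Kb⁻¹ * (c * ∑ k ∈ s, G k * uf k)))
        = (Kb * Kb⁻¹) * (c * (A * ∑ k ∈ s, G k * uf k)) from by ring,
    mul_inv_cancel₀ hK, one_mul]

end Aux

/-- the Cartan relations for `K_{β_i}` in an arbitrary rational form. -/
theorem qgroup_rational_form_cartan
    (ℓ : ℕ) (hℓ : 1 ≤ ℓ)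
    (a : Fin ℓ → Fin ℓ → ℤ) (ha : ∀ i, a i i = 2) (ha' : ∀ i j, i ≠ j → a i j ≤ 0)
    (d : Fin ℓ → ℕ) (hd : ∀ i, 0 < d i)
    (hsym : ∀ i j, (d i : ℤ) * a i j = (d j : ℤ) * a j i)
    (m : Fin ℓ → ℕ) (hm : ∀ i, 0 < m i)
    (l : Fin ℓ → ℕ) (hln : ∀ i, (l i : ℤ) = ∑ j, (m j : ℤ) * a j i)
    (Rp Rm : (i : Fin ℓ) → Polynomial (WField ℓ l))
    (hR : ∀ i, Rp i * Rm i =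
      ∏ t : Fin (l i), (Polynomial.X * Polynomial.C (Wsmall ℓ l i t)⁻¹
        - Polynomial.C (Wsmall ℓ l i t)))
    (nM NM : Fin ℓ → Fin ℓ → ℤ) (i j : Fin ℓ) :
    (Kbop ℓ m l d nM NM i ∘ Eop ℓ m l d a Rp j ∘ Kbinv ℓ m l d nM NM i
        = cst ℓ m l (qz ((d j : ℤ) * nM j i)) • Eop ℓ m l d a Rp j)
    ∧ (Kbop ℓ m l d nM NM i ∘ Fop ℓ m l d a Rm j ∘ Kbinv ℓ m l d nM NM i
        = cst ℓ m l (qz (-((d j : ℤ) * nM j i))) • Fop ℓ m l d a Rm j) := by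
  have hK0 : Kbeta ℓ m l d nM NM i ≠ 0 := Kbeta_ne_zero ℓ m l d nM NM i
  constructor
  · funext f
    simp only [Function.comp_apply, Pi.smul_apply, smul_eq_mul, Kbop, Kbinv, Eop]
    have hu : ∀ k : Fin (m j), (uik ℓ m l d j k).symm ((Kbeta ℓ m l d nM NM i)⁻¹ * f)
        = cst ℓ m l (qz ((d j : ℤ) * nM j i))
          * ((Kbeta ℓ m l d nM NM i)⁻¹ * (uik ℓ m l d j k).symm f) := by
      intro k
      rw [map_mul, map_inv₀, uik_symm_Kbeta, mul_inv, ← cst_inv,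
        show (qz (-((d j : ℤ) * nM j i)))⁻¹ = qz ((d j : ℤ) * nM j i) by
          rw [qz_neg, inv_inv],
        mul_assoc]
    simp only [hu]
    exact conj_sum _ _ _ _ _ _ hK0
  · funext f
    simp only [Function.comp_apply, Pi.smul_apply, smul_eq_mul, Kbop, Kbinv, Fop]
    have hu : ∀ k : Fin (m j), (uik ℓ m l d j k) ((Kbeta ℓ m l d nM NM i)⁻¹ * f)
        = cst ℓ m l (qz (-((d j : ℤ) * nM j i)))
          * ((Kbeta ℓ m l d nM NM i)⁻¹ * (uik ℓ m l d j k) f) := by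
      intro k
      rw [map_mul, map_inv₀, uik_Kbeta, mul_inv, ← cst_inv, ← qz_neg, mul_assoc]
    simp only [hu]
    exact conj_sum _ _ _ _ _ _ hK0
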